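/- arXiv:1907.05309 — 5 statements merged into one kernel-verified Lean document; each statement's English description precedes it below -/
import Mathlib

section
/- Let A : Matrix (Fin n) (Fin n) ℝ with every row containing a nonzero entry, a_i := max over j of |A i j|, and let σ : Equiv.Perm (Fin n) satisfy A (σ j) j ≠ 0 for all j. Suppose u, v : Fin n → ℝ satisfy the dual conditions: u i + v j ≤ Real.log (a_i) − Real.log |A i j| for all (i, j) with A i j ≠ 0, with equality whenever i = σ j. Define the scaled and permuted matrix à by à i j := (Real.exp (u (σ i)) / a_{σ i}) * A (σ i) j * Real.exp (v j). Then |à i j| ≤ 1 for all i, j, and |à j j| = 1 for all j. -/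
/-- given dual vectors `u`, `v` for the assignment problem (with costs
`c i j = log (a i) − log |A i j|`, satisfied with equality on the matching edges
`(σ j, j)`), the scaled and permuted matrix
`Ã i j = (exp (u (σ i)) / a (σ i)) * A (σ i) j * exp (v j)` satisfies `|Ã i j| ≤ 1`
everywhere and `|Ã j j| = 1` on the diagonal. -/
theorem scaled_permuted_matrix_bounds {n : ℕ} (A : Matrix (Fin n) (Fin n) ℝ)
    (hrow : ∀ i : Fin n, ∃ j : Fin n, A i j ≠ 0)
    (a : Fin n → ℝ) (ha : ∀ i : Fin n, IsGreatest (Set.range fun j => |A i j|) (a i))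
    (σ : Equiv.Perm (Fin n)) (hσ : ∀ j : Fin n, A (σ j) j ≠ 0)
    (u v : Fin n → ℝ)
    (hdual : ∀ i j : Fin n, A i j ≠ 0 → u i + v j ≤ Real.log (a i) - Real.log |A i j|)
    (heq : ∀ j : Fin n, u (σ j) + v j = Real.log (a (σ j)) - Real.log |A (σ j) j|) :
    (∀ i j : Fin n, |(Real.exp (u (σ i)) / a (σ i)) * A (σ i) j * Real.exp (v j)| ≤ 1) ∧
    (∀ j : Fin n, |(Real.exp (u (σ j)) / a (σ j)) * A (σ j) j * Real.exp (v j)| = 1) := by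
  have hapos : ∀ i, 0 < a i := by
    intro i
    obtain ⟨j, hj⟩ := hrow i
    exact lt_of_lt_of_le (abs_pos.mpr hj) ((ha i).2 ⟨j, rfl⟩)
  have habs : ∀ i j : Fin n, |(Real.exp (u i) / a i) * A i j * Real.exp (v j)|
      = Real.exp (u i + v j) * (|A i j| / a i) := by
    intro i j
    rw [abs_mul, abs_mul, abs_div, abs_of_pos (Real.exp_pos _),
      abs_of_pos (Real.exp_pos _), abs_of_pos (hapos i), Real.exp_add]
    ring
  have hle : ∀ i j : Fin n, A i j ≠ 0 →
      Real.exp (u i + v j) * (|A i j| / a i) ≤ 1 := by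
    intro i j hij
    have hA : (0:ℝ) < |A i j| := abs_pos.mpr hij
    have h1 : Real.exp (u i + v j) ≤ a i / |A i j| := by
      calc Real.exp (u i + v j) ≤ Real.exp (Real.log (a i) - Real.log |A i j|) :=
            Real.exp_le_exp.mpr (hdual i j hij)
        _ = a i / |A i j| := by
            rw [Real.exp_sub, Real.exp_log (hapos i), Real.exp_log hA]
    calc Real.exp (u i + v j) * (|A i j| / a i)
        ≤ (a i / |A i j|) * (|A i j| / a i) := by
          apply mul_le_mul_of_nonneg_right h1
          exact div_nonneg (abs_nonneg _) (hapos i).le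
      _ = 1 := by
          rw [div_mul_div_comm, mul_comm (a i), div_self (mul_pos hA (hapos i)).ne']
  refine ⟨fun i j => ?_, fun j => ?_⟩
  · by_cases hij : A (σ i) j = 0
    · simp [hij]
    · rw [habs]; exact hle (σ i) j hij
  · rw [habs]
    have hA : (0:ℝ) < |A (σ j) j| := abs_pos.mpr (hσ j)
    rw [heq j, Real.exp_sub, Real.exp_log (hapos (σ j)), Real.exp_log hA]
    field_simp
    exact div_self (hapos (σ j)).ne'
end

section
/- Let A : Matrix (Fin n) (Fin n) ℝ and let F be the fill relation of A. If i < j < k (as elements of Fin n) and F i j and F i k hold, then F j k holds. -/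
/-- The undirected graph `G(A)` of a square real matrix `A`: `i` is adjacent to `j` iff
`i ≠ j` and (`A i j ≠ 0` or `A j i ≠ 0`). -/
def graphOf {n : ℕ} (A : Matrix (Fin n) (Fin n) ℝ) : SimpleGraph (Fin n) where
  Adj i j := i ≠ j ∧ (A i j ≠ 0 ∨ A j i ≠ 0)
  symm := by
    constructor
    intro i j h
    exact ⟨h.1.symm, h.2.symm⟩
  loopless := by
    constructor
    intro i h
    exact h.1 rfl

/-- The fill relation of `A`: `fill A i j` iff `i ≠ j` and there is a walk from `i` to
`j` in `G(A)` all of whose interior vertices `u` satisfy `u < i` and `u < j`. -/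
def fill {n : ℕ} (A : Matrix (Fin n) (Fin n) ℝ) (i j : Fin n) : Prop :=
  i ≠ j ∧ ∃ w : (graphOf A).Walk i j, ∀ u ∈ w.support.tail.dropLast, u < i ∧ u < j

/-!
Let `p` and `q` be the walks witnessing `fill A i j` and `fill A i k`. Their interior
vertices are below `i`, so the walk `p⁻¹ q` from `j` to `k` passes only through `i` and
vertices below `i`, all of which lie below `j` and `k`.
-/

namespace SimpleGraph.Walk

variable {V : Type*} {G : SimpleGraph V} {u v w : V}

theorem support_tail_ne_nil {p : G.Walk u v} (hp : ¬p.Nil) : p.support.tail ≠ [] :=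
  support_tail_of_not_nil p hp ▸ p.tail.support_ne_nil

theorem support_dropLast_of_not_nil {p : G.Walk u v} (hp : ¬p.Nil) :
    p.support.dropLast = u :: p.support.tail.dropLast := by
  rw [← List.dropLast_cons_of_ne_nil (support_tail_ne_nil hp), cons_tail_support]

theorem support_tail_reverse {p : G.Walk u v} (hp : ¬p.Nil) :
    p.reverse.support.tail = p.support.tail.dropLast.reverse ++ [u] := by
  rw [support_reverse, List.tail_reverse, support_dropLast_of_not_nil hp, List.reverse_cons]

theorem support_tail_dropLast_append (p : G.Walk u v) {q : G.Walk v w} (hq : ¬q.Nil) :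
    (p.append q).support.tail.dropLast = p.support.tail ++ q.support.tail.dropLast := by
  rw [support_append, List.tail_append_of_ne_nil p.support_ne_nil,
    List.dropLast_append_of_ne_nil (support_tail_ne_nil hq)]

theorem support_tail_dropLast_reverse_append {p : G.Walk v u} {q : G.Walk v w} (hp : ¬p.Nil)
    (hq : ¬q.Nil) : (p.reverse.append q).support.tail.dropLast =
      p.support.tail.dropLast.reverse ++ v :: q.support.tail.dropLast := by
  rw [support_tail_dropLast_append _ hq, support_tail_reverse hp, List.append_assoc,
    List.singleton_append]

end SimpleGraph.Walk

open SimpleGraph.Walk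

/-- if `i < j < k` and both `fill A i j` and `fill A i k` hold, then
`fill A j k` holds. -/
theorem fill_trans_of_lt {n : ℕ} (A : Matrix (Fin n) (Fin n) ℝ) (i j k : Fin n)
    (hij : i < j) (hjk : j < k) (hFij : fill A i j) (hFik : fill A i k) :
    fill A j k := by
  obtain ⟨hij_ne, p, hp⟩ := hFij
  obtain ⟨hik_ne, q, hq⟩ := hFik
  refine ⟨hjk.ne, p.reverse.append q, fun u hu => ?_⟩
  rw [support_tail_dropLast_reverse_append (not_nil_of_ne hij_ne) (not_nil_of_ne hik_ne)] at hu
  have hui : u ≤ i := by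
    simp only [List.mem_append, List.mem_reverse, List.mem_cons] at hu
    rcases hu with hu | rfl | hu
    exacts [(hp u hu).1.le, le_rfl, (hq u hu).1.le]
  exact ⟨hui.trans_lt hij, hui.trans_lt (hij.trans hjk)⟩
end

section
/- Let A : Matrix (Fin n) (Fin n) ℝ with fill relation F, let i : Fin n be such that the set {j : i < j ∧ F i j} is nonempty, and let parent i be its least element. Then for every j with i < j and F i j and j ≠ parent i, one has parent i < j and F (parent i) j. -/
namespace SimpleGraph.Walk

variable {V : Type*} {G : SimpleGraph V}

def interior {u v : V} (w : G.Walk u v) : List V := w.support.tail.dropLast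

theorem interior_reverse {u v : V} (w : G.Walk u v) : w.reverse.interior = w.interior.reverse := by
  simp [interior, List.tail_reverse, List.dropLast_reverse, List.tail_dropLast]

theorem mem_interior_or_eq_of_mem_support_tail {u v x : V} (w : G.Walk u v)
    (hx : x ∈ w.support.tail) : x ∈ w.interior ∨ x = v := by
  rw [← w.dropLast_support_concat, List.tail_append] at hx
  grind [interior, List.tail_dropLast]

theorem interior_append_subset {u v w : V} (p : G.Walk u v) (q : G.Walk v w) :
    (p.append q).interior ⊆ p.interior ++ v :: q.interior := by
  intro x hx
  rw [interior, tail_support_append, List.dropLast_append] at hx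
  split_ifs at hx
  · exact List.mem_append_left _ hx
  · rcases List.mem_append.1 hx with hp | hq
    · rcases p.mem_interior_or_eq_of_mem_support_tail hp with hp | rfl <;> simp [*]
    · simp [interior, hq]

end SimpleGraph.Walk

open SimpleGraph

theorem fill_iff_exists_walk_interior {n : ℕ} (A : Matrix (Fin n) (Fin n) ℝ) (i j : Fin n) :
    fill A i j ↔ i ≠ j ∧ ∃ w : (graphOf A).Walk i j, ∀ u ∈ w.interior, u < i ∧ u < j :=
  Iff.rfl

theorem fill_of_fill_of_fill {n : ℕ} {A : Matrix (Fin n) (Fin n) ℝ} {i p j : Fin n}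
    (hip : i < p) (hij : i < j) (hpj : p ≠ j) (hfp : fill A i p) (hfj : fill A i j) :
    fill A p j := by
  rw [fill_iff_exists_walk_interior] at hfp hfj ⊢
  obtain ⟨-, wp, hwp⟩ := hfp
  obtain ⟨-, wj, hwj⟩ := hfj
  refine ⟨hpj, wp.reverse.append wj, fun u hu => ?_⟩
  have hu' := Walk.interior_append_subset _ _ hu
  rw [Walk.interior_reverse, List.mem_append, List.mem_reverse, List.mem_cons] at hu'
  rcases hu' with hu | rfl | hu
  · exact ⟨(hwp u hu).2, (hwp u hu).1.trans hij⟩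
  · exact ⟨hip, hij⟩
  · exact ⟨(hwj u hu).1.trans hip, (hwj u hu).2⟩

/-- let `p = parent i` be the least element of the (nonempty) set
`{j | i < j ∧ fill A i j}`.  Then for every `j` with `i < j`, `fill A i j` and
`j ≠ parent i`, one has `parent i < j` and `fill A (parent i) j`. -/
theorem fill_parent_fill {n : ℕ} (A : Matrix (Fin n) (Fin n) ℝ) (i p : Fin n)
    (hp : IsLeast {j : Fin n | i < j ∧ fill A i j} p) :
    ∀ j : Fin n, i < j → fill A i j → j ≠ p → p < j ∧ fill A p j := by
  intro j hij hfj hjp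
  have hpj : p < j := (hp.2 ⟨hij, hfj⟩).lt_of_ne hjp.symm
  exact ⟨hpj, fill_of_fill_of_fill hp.1.1 hij hpj.ne hp.1.2 hfj⟩
end

section
/- Let A : Matrix (Fin n) (Fin n) ℝ with fill relation F, and let j < k be elements of Fin n. Then F j k holds if and only if there exists a vertex i that is a descendant of j in the elimination tree (i.e. i = j, or j is obtained from i by iterating parent) such that i is adjacent to k in G(A), i.e. A i k ≠ 0 or A k i ≠ 0. -/
/-- `i` is a descendant of `j` in the elimination tree of `A`: `i = j` or `j` is obtained
from `i` by iterating the parent map (each `t (l+1)` being the least element of the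
nonempty set `{u | t l < u ∧ fill A (t l) u}`, i.e. the elimination-tree parent of `t l`). -/
def IsEtreeDescendant {n : ℕ} (A : Matrix (Fin n) (Fin n) ℝ) (i j : Fin n) : Prop :=
  ∃ (m : ℕ) (t : ℕ → Fin n), t 0 = i ∧ t m = j ∧
    ∀ l < m, IsLeast {u : Fin n | t l < u ∧ fill A (t l) u} (t (l + 1))

/-!
Two facts about fill drive the proof. First, if `x < p < k` and `x` fills both `p` and `k`, then
`p` fills `k`: join the two fill walks at `x`, whose interior lies below `x`. Climbing the
elimination tree from a neighbour `i` of `k` therefore carries `fill A · k` up to `j`.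
Conversely, a walk from `i` to `j` through vertices `≤ j` makes `i` a descendant of `j`: its first
vertex above `i` is filled by `i`, so the parent `p` of `i` lies in `(i, j]`, and the fill walk
from `i` to `p` followed by the given walk joins `p` to `j` through vertices `≤ j`. On a fill walk
from `j` to `k`, the vertex just before `k` is such an `i`.
-/

open SimpleGraph Relation

theorem Relation.reflTransGen_iff_exists_nat_chain {α : Type*} {r : α → α → Prop} {a b : α} :
    ReflTransGen r a b ↔
      ∃ (m : ℕ) (t : ℕ → α), t 0 = a ∧ t m = b ∧ ∀ l < m, r (t l) (t (l + 1)) := by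
  constructor
  · intro h
    induction h using ReflTransGen.head_induction_on with
    | refl => exact ⟨0, fun _ => b, rfl, rfl, by simp⟩
    | @head a c hac _ ih =>
      obtain ⟨m, t, ht0, htm, ht⟩ := ih
      refine ⟨m + 1, fun | 0 => a | l + 1 => t l, rfl, htm, fun l hl => ?_⟩
      cases l with
      | zero => simpa [ht0] using hac
      | succ l => exact ht l (by omega)
  · rintro ⟨m, t, rfl, rfl, ht⟩
    have key : ∀ l ≤ m, ReflTransGen r (t 0) (t l) := by
      intro l
      induction l with
      | zero => exact fun _ => .refl
      | succ l ih => exact fun hl => (ih (by omega)).tail (ht l (by omega))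
    exact key m le_rfl

namespace SimpleGraph.Walk

variable {V : Type*} {G : SimpleGraph V} {u v x : V}

lemma eq_or_eq_or_mem_interior_of_mem_support (w : G.Walk u v) (hx : x ∈ w.support) :
    x = u ∨ x = v ∨ x ∈ w.support.tail.dropLast := by
  rw [← w.cons_tail_support, List.mem_cons] at hx
  refine hx.imp_right fun hx => or_iff_not_imp_left.2 fun hxv => ?_
  exact List.mem_dropLast_of_mem_of_ne_getLast hx (by rwa [List.getLast_tail, w.getLast_support])

lemma IsPath.ne_of_mem_interior {w : G.Walk u v} (hw : w.IsPath)
    (hx : x ∈ w.support.tail.dropLast) : x ≠ u ∧ x ≠ v := by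
  have hnodup := hw.support_nodup
  constructor
  · rintro rfl
    rw [← w.cons_tail_support] at hnodup
    exact hnodup.notMem (List.mem_of_mem_dropLast hx)
  · rintro rfl
    rw [← List.tail_dropLast] at hx
    rw [← List.dropLast_append_getLast w.support_ne_nil, w.getLast_support,
      List.nodup_append] at hnodup
    exact hnodup.2.2 _ (List.mem_of_mem_tail hx) _ (List.mem_singleton_self _) rfl

lemma exists_first_boundary_adj {p : V → Prop} (w : G.Walk u v) (hu : p u) (hv : ¬p v) :
    ∃ x y, G.Adj x y ∧ ¬p y ∧ y ∈ w.support ∧ ∃ w' : G.Walk u x, ∀ z ∈ w'.support, p z := by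
  induction w with
  | nil => exact absurd hu hv
  | @cons a b c h w ih =>
    by_cases hb : p b
    · obtain ⟨x, y, hxy, hy, hyw, w', hw'⟩ := ih hb hv
      refine ⟨x, y, hxy, hy, List.mem_cons_of_mem _ hyw, cons h w', ?_⟩
      simpa [hu] using hw'
    · exact ⟨a, b, h, hb, List.mem_cons_of_mem _ w.start_mem_support, nil, by simpa⟩

end SimpleGraph.Walk

open SimpleGraph.Walk

variable {n : ℕ} {A : Matrix (Fin n) (Fin n) ℝ} {i j k p x : Fin n}

lemma fill_iff : fill A i j ↔
    i ≠ j ∧ ∃ w : (graphOf A).Walk i j, ∀ u ∈ w.support, u = i ∨ u = j ∨ u < i ∧ u < j := by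
  classical
  refine ⟨fun ⟨hij, w, hw⟩ => ⟨hij, w, fun u hu => ?_⟩,
    fun ⟨hij, w, hw⟩ => ⟨hij, w.bypass, fun u hu => ?_⟩⟩
  · exact (w.eq_or_eq_or_mem_interior_of_mem_support hu).imp_right (Or.imp_right (hw u))
  · obtain ⟨hui, huj⟩ := w.bypass_isPath.ne_of_mem_interior hu
    have hu' := w.support_bypass_subset_support (List.mem_of_mem_tail (List.mem_of_mem_dropLast hu))
    exact ((hw u hu').resolve_left hui).resolve_left huj

lemma fill_of_adj (h : (graphOf A).Adj i j) : fill A i j :=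
  fill_iff.2 ⟨h.ne, h.toWalk, by simp⟩

lemma fill_of_fill_of_fill_s10 (hxp : x < p) (hpk : p < k) (hp : fill A x p) (hk : fill A x k) :
    fill A p k := by
  obtain ⟨-, w₁, hw₁⟩ := fill_iff.1 hp
  obtain ⟨-, w₂, hw₂⟩ := fill_iff.1 hk
  refine fill_iff.2 ⟨hpk.ne, w₁.reverse.append w₂, fun u hu => ?_⟩
  rw [mem_support_append_iff, support_reverse, List.mem_reverse] at hu
  have := hu.imp (hw₁ u) (hw₂ u)
  omega

lemma exists_walk_le_of_fill (hij : i < j) (h : fill A i j) :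
    ∃ w : (graphOf A).Walk i j, ∀ u ∈ w.support, u ≤ j := by
  obtain ⟨-, w, hw⟩ := fill_iff.1 h
  exact ⟨w, fun u hu => by have := hw u hu; omega⟩

lemma exists_fill_of_walk {z : Fin n} (w : (graphOf A).Walk i z) (hiz : i < z) :
    ∃ y ∈ w.support, i < y ∧ fill A i y := by
  obtain ⟨x, y, hxy, hy, hyw, w', hw'⟩ :=
    w.exists_first_boundary_adj (p := (· ≤ i)) le_rfl hiz.not_ge
  rw [not_le] at hy
  refine ⟨y, hyw, hy, fill_iff.2 ⟨hy.ne, w'.concat hxy, fun u hu => ?_⟩⟩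
  rw [support_concat, List.mem_append, List.mem_singleton] at hu
  have := hu.imp_left (hw' u)
  omega

def IsEtreeParent (A : Matrix (Fin n) (Fin n) ℝ) (i p : Fin n) : Prop :=
  IsLeast {u | i < u ∧ fill A i u} p

lemma isEtreeDescendant_iff : IsEtreeDescendant A i j ↔ ReflTransGen (IsEtreeParent A) i j :=
  (reflTransGen_iff_exists_nat_chain (r := IsEtreeParent A)).symm

lemma exists_isEtreeParent_of_fill (hij : i < j) (h : fill A i j) : ∃ p, IsEtreeParent A i p :=
  let ⟨p, hp⟩ := (Set.toFinite {u | i < u ∧ fill A i u}).exists_minimal ⟨j, hij, h⟩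
  ⟨p, minimal_iff_isLeast.1 hp⟩

lemma le_of_reflTransGen_isEtreeParent (h : ReflTransGen (IsEtreeParent A) i j) : i ≤ j := by
  induction h with
  | refl => exact le_rfl
  | tail _ hp ih => exact ih.trans hp.1.1.le

lemma fill_of_reflTransGen_isEtreeParent (h : ReflTransGen (IsEtreeParent A) i j) (hjk : j < k)
    (hik : fill A i k) : fill A j k := by
  induction h with
  | refl => exact hik
  | tail _ hp ih => exact fill_of_fill_of_fill_s10 hp.1.1 hjk hp.1.2 (ih (hp.1.1.trans hjk))

theorem reflTransGen_isEtreeParent_of_walk (w : (graphOf A).Walk i j)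
    (hw : ∀ u ∈ w.support, u ≤ j) : ReflTransGen (IsEtreeParent A) i j := by
  induction i using WellFoundedGT.induction with
  | _ i ih =>
    rcases (hw i w.start_mem_support).lt_or_eq with hij | rfl
    · obtain ⟨y, hyw, hiy, hfill⟩ := exists_fill_of_walk w hij
      obtain ⟨p, hp⟩ := exists_isEtreeParent_of_fill hiy hfill
      have hpj : p ≤ j := (hp.2 ⟨hiy, hfill⟩).trans (hw y hyw)
      obtain ⟨w', hw'⟩ := exists_walk_le_of_fill hp.1.1 hp.1.2
      refine .head hp (ih p hp.1.1 (w'.reverse.append w) fun u hu => ?_)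
      rw [mem_support_append_iff, support_reverse, List.mem_reverse] at hu
      exact hu.elim (fun hu => (hw' u hu).trans hpj) (hw u)
    · exact .refl

/-- for `j < k`, `fill A j k` holds iff some descendant `i` of `j` in the
elimination tree is adjacent to `k` in `G(A)`, i.e. `A i k ≠ 0` or `A k i ≠ 0`. -/
theorem fill_iff_descendant_adj {n : ℕ} (A : Matrix (Fin n) (Fin n) ℝ) (j k : Fin n)
    (hjk : j < k) :
    fill A j k ↔ ∃ i : Fin n, IsEtreeDescendant A i j ∧ (A i k ≠ 0 ∨ A k i ≠ 0) := by
  simp_rw [isEtreeDescendant_iff]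
  constructor
  · intro h
    obtain ⟨-, w, hw⟩ := fill_iff.1 h
    obtain ⟨i, y, hiy, hy, hyw, w', hw'⟩ :=
      w.exists_first_boundary_adj (p := (· ≤ j)) le_rfl hjk.not_ge
    obtain rfl : y = k := by have := hw y hyw; omega
    exact ⟨i, reflTransGen_isEtreeParent_of_walk w'.reverse (by simpa using hw'), hiy.2⟩
  · rintro ⟨i, hij, hik⟩
    have hi_lt_k : i < k := (le_of_reflTransGen_isEtreeParent hij).trans_lt hjk
    exact fill_of_reflTransGen_isEtreeParent hij hjk (fill_of_adj ⟨hi_lt_k.ne, hik⟩)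
end

section
/- Let A : Matrix (Fin n) (Fin n) ℝ with n ≥ 1 and suppose the undirected graph G(A) is connected (as a simple graph on Fin n). Then for every vertex i that is not the largest vertex of Fin n, there exists j with i < j and F i j. (Hence the elimination-tree parent of every non-root vertex is well defined and the parent relation defines a tree rooted at the largest vertex.) -/
/-!
Walk from `i` to some `t > i` along a path. Cut the path at its first vertex `j > i`: every
vertex strictly between `i` and `j` is `≤ i`, and it is not `i` because a path does not
return to its start, so it is `< i < j`. Hence `fill A i j`.
-/

namespace SimpleGraph.Walk

variable {V : Type*} {G : SimpleGraph V}

theorem exists_prefix_until_first {P : V → Prop} :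
    ∀ {v t : V} (w : G.Walk v t), P t →
      ∃ j, P j ∧ ∃ p : G.Walk v j, (∀ u ∈ p.support.dropLast, ¬ P u) ∧ p.support ⊆ w.support
  | _, _, .nil, ht => ⟨_, ht, .nil, by simp, List.Subset.refl _⟩
  | v, _, .cons h q, ht => by
    by_cases hv : P v
    · exact ⟨v, hv, .nil, by simp, by simp⟩
    obtain ⟨j, hj, p, hp, hsub⟩ := exists_prefix_until_first q ht
    refine ⟨j, hj, .cons h p, ?_, List.cons_subset_cons _ hsub⟩
    rw [support_cons, List.dropLast_cons_of_ne_nil p.support_ne_nil]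
    simpa [hv] using hp

end SimpleGraph.Walk

theorem parent_exists_of_connected_general {n : ℕ} (A : Matrix (Fin n) (Fin n) ℝ)
    (hconn : (graphOf A).Connected) (i : Fin n) (hi : ¬ IsMax i) :
    ∃ j : Fin n, i < j ∧ fill A i j := by
  obtain ⟨t, hit⟩ := not_isMax_iff.mp hi
  obtain ⟨w, hw⟩ := ((hconn.preconnected i t).some).toPath
  cases w with
  | nil => exact absurd hit (lt_irrefl i)
  | cons h q =>
    have hiq : i ∉ q.support := (SimpleGraph.Walk.cons_isPath_iff h q).mp hw |>.2
    obtain ⟨j, hij, p, hp, hsub⟩ := q.exists_prefix_until_first (P := (i < ·)) hit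
    have hlt : ∀ u ∈ p.support.dropLast, u < i := fun u hu =>
      lt_of_le_of_ne (not_lt.mp (hp u hu))
        fun hui => hiq (hui ▸ hsub (List.dropLast_subset _ hu))
    refine ⟨j, hij, hij.ne, .cons h p, fun u hu => ?_⟩
    rw [SimpleGraph.Walk.support_cons, List.tail_cons] at hu
    exact ⟨hlt u hu, (hlt u hu).trans hij⟩

/-- if `n ≥ 1` and `G(A)` is connected, then every vertex `i` that is not
the largest vertex of `Fin n` has some `j` with `i < j` and `fill A i j` (so the
elimination-tree parent of every non-root vertex is well defined). -/
theorem parent_exists_of_connected {n : ℕ} (A : Matrix (Fin n) (Fin n) ℝ) (hn : 1 ≤ n)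
    (hconn : (graphOf A).Connected) (i : Fin n) (hi : ¬ IsMax i) :
    ∃ j : Fin n, i < j ∧ fill A i j :=
  parent_exists_of_connected_general A hconn i hi
end
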